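/- arXiv:2202.11627 — 3 statements merged into one kernel-verified Lean document; each statement's English description precedes it below -/
import Mathlib

section
/- Let 𝒜 = 𝒟 ∪ 𝒟′, where 𝒟′ is the set of paths in ℰ containing exactly one catastrophe step C_k (for some k ≥ 2), this catastrophe being the last step of the path. Then for every path P ∈ ℰ there exists exactly one path Q ∈ 𝒜 with |Q| = |P| such that P and Q are U-equivalent. In other words, 𝒜 is a complete set of representatives of the U-equivalence classes of ℰ. -/
/-!
Replacing every step other than `U` by `D` keeps the up-steps in place and never lowers the
path, since a catastrophe `C k` descends by `k ≥ 2`. In `ℰ` the last step is forced by the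
height `h ≥ 1` it starts from: it is `D` if `h = 1` and `C h` otherwise, i.e. `cfin h`.
So the representative of `P` is obtained by turning all steps but the last into `D`'s and
closing the resulting path, of height `h ≥ 1`, by `cfin h`; and a path of `𝒜` is determined by
its length and its up-steps, because all its steps but the last are `U` or `D`.
-/

/-- Steps of a Dyck path with catastrophes: up-step `U`, down-step `D`,
and catastrophe step `C k` of size `k` (valid paths only use `k ≥ 2`). -/
inductive Step where
  | U : Step
  | D : Step
  | C : ℕ → Step
  deriving DecidableEq

/-- The vertical displacement of a step. -/
def Step.val : Step → ℤ
  | .U => 1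
  | .D => -1
  | .C k => -(k : ℤ)

/-- The height (ordinate) of the path after its first `i` steps. -/
def hgt (P : List Step) (i : ℕ) : ℤ := ((P.take i).map Step.val).sum

/-- `InE P` means `P` is a Dyck path with catastrophes (a member of ℰ):
it stays at height ≥ 0, ends on the x-axis, and every catastrophe step
`C k` has `k ≥ 2` and starts at height `k` (hence ends on the x-axis). -/
def InE (P : List Step) : Prop :=
  (∀ i, 0 ≤ hgt P i) ∧ hgt P P.length = 0 ∧
    ∀ i k, P[i]? = some (Step.C k) → 2 ≤ k ∧ hgt P i = (k : ℤ)

/-- `(UD)^k`. -/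
def UDpow (k : ℕ) : List Step := (List.replicate k [Step.U, Step.D]).flatten

/-- `(DU)^k`. -/
def DUpow (k : ℕ) : List Step := (List.replicate k [Step.D, Step.U]).flatten

/-- `U^k`. -/
def Upow (k : ℕ) : List Step := List.replicate k Step.U

/-- `C_s` with the convention `C_1 = D`. -/
def cfin (s : ℕ) : Step := if s = 1 then Step.D else Step.C s

/-- Test whether a step is a catastrophe step. -/
def isCatB : Step → Bool
  | .C _ => true
  | _ => false

/-- The number of catastrophe steps in a path. -/
def catCount (P : List Step) : ℕ := P.countP isCatB

/-- Two paths are `U`-equivalent when their up-steps occur at the same positions. -/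
def UEquiv (P Q : List Step) : Prop :=
  ∀ i : ℕ, P[i]? = some Step.U ↔ Q[i]? = some Step.U

/-- Membership in 𝒜 = 𝒟 ∪ 𝒟′ : either a Dyck path (no catastrophe), or a path of ℰ
with exactly one catastrophe, this catastrophe being the last step. -/
def InA (P : List Step) : Prop :=
  InE P ∧ (catCount P = 0 ∨
    (catCount P = 1 ∧ ∃ k, 2 ≤ k ∧ P.getLast? = some (Step.C k)))


namespace Step

def toDyck (s : Step) : Step := if s = U then U else D

lemma val_le_val_toDyck {s : Step} (hs : s ≠ C 0) : s.val ≤ s.toDyck.val := by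
  cases s with
  | U => simp [toDyck]
  | D => simp [toDyck]
  | C k =>
    have : k ≠ 0 := fun hk => hs (hk ▸ rfl)
    simp [toDyck, val]
    omega

lemma val_cfin (k : ℕ) : (cfin k).val = -k := by
  unfold cfin
  split_ifs with h <;> simp [val, h]

end Step

lemma cfin_ne_U (k : ℕ) : cfin k ≠ Step.U := by
  unfold cfin; split_ifs <;> simp

lemma hgt_append_of_le_length {L M : List Step} {i : ℕ} (hi : i ≤ L.length) :
    hgt (L ++ M) i = hgt L i := by
  rw [hgt, hgt, List.take_append_of_le_length hi]

lemma hgt_of_length_le {P : List Step} {i : ℕ} (hi : P.length ≤ i) :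
    hgt P i = (P.map Step.val).sum := by
  rw [hgt, List.take_of_length_le hi]

lemma hgt_le_hgt_map_toDyck {P : List Step} (hP : Step.C 0 ∉ P) (i : ℕ) :
    hgt P i ≤ hgt (P.map Step.toDyck) i := by
  rw [hgt, hgt, ← List.map_take, List.map_map]
  exact List.sum_le_sum fun s hs => Step.val_le_val_toDyck
    fun h => hP (h ▸ List.mem_of_mem_take hs)

lemma catCount_eq_zero_iff {P : List Step} : catCount P = 0 ↔ ∀ k, Step.C k ∉ P := by
  simp only [catCount, List.countP_eq_zero]
  constructor
  · intro h k hk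
    simpa [isCatB] using h _ hk
  · rintro h (_ | _ | k) hs
    exacts [by decide, by decide, absurd hs (h k)]

lemma catCount_map_toDyck (P : List Step) : catCount (P.map Step.toDyck) = 0 := by
  refine catCount_eq_zero_iff.2 fun k hk => ?_
  obtain ⟨s, -, hs⟩ := List.mem_map.1 hk
  unfold Step.toDyck at hs
  split_ifs at hs

lemma map_toDyck_eq_self {P : List Step} (hP : catCount P = 0) : P.map Step.toDyck = P := by
  refine (List.map_congr_left fun s hs => ?_).trans (List.map_id P)
  cases s with
  | U => rfl
  | D => rfl
  | C k => exact absurd hs (catCount_eq_zero_iff.1 hP k)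

namespace UEquiv

lemma refl (P : List Step) : UEquiv P P := fun _ => Iff.rfl

lemma symm {P Q : List Step} (h : UEquiv P Q) : UEquiv Q P := fun i => (h i).symm

lemma trans {P Q R : List Step} (h : UEquiv P Q) (h' : UEquiv Q R) : UEquiv P R :=
  fun i => (h i).trans (h' i)

lemma take {P Q : List Step} (h : UEquiv P Q) (n : ℕ) : UEquiv (P.take n) (Q.take n) := by
  intro i
  simp only [List.getElem?_take]
  split_ifs
  exacts [h i, Iff.rfl]

lemma append {L M L' M' : List Step} (h : UEquiv L L') (hlen : L.length = L'.length)
    (h' : UEquiv M M') : UEquiv (L ++ M) (L' ++ M') := by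
  intro i
  rcases lt_or_ge i L.length with hi | hi
  · rw [List.getElem?_append_left hi, List.getElem?_append_left (hlen ▸ hi)]
    exact h i
  · rw [List.getElem?_append_right hi, List.getElem?_append_right (hlen ▸ hi), hlen]
    exact h' _

lemma singleton {s t : Step} (hs : s ≠ Step.U) (ht : t ≠ Step.U) : UEquiv [s] [t] := by
  rintro (_ | i) <;> simp [hs, ht]

end UEquiv

lemma uEquiv_map_toDyck (P : List Step) : UEquiv P (P.map Step.toDyck) := by
  intro i
  rw [List.getElem?_map]
  cases P[i]? with
  | none => simp
  | some s => by_cases hs : s = Step.U <;> simp [Step.toDyck, hs]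

lemma map_toDyck_eq_of_uEquiv {P Q : List Step} (h : UEquiv P Q)
    (hlen : P.length = Q.length) :
    P.map Step.toDyck = Q.map Step.toDyck := by
  refine List.ext_getElem? fun i => ?_
  rw [List.getElem?_map, List.getElem?_map]
  rcases lt_or_ge i P.length with hi | hi
  · rw [List.getElem?_eq_getElem hi, List.getElem?_eq_getElem (hlen ▸ hi)]
    have := h i
    simp only [List.getElem?_eq_getElem hi, List.getElem?_eq_getElem (hlen ▸ hi),
      Option.some.injEq] at this
    simp [Step.toDyck, this]
  · rw [List.getElem?_eq_none hi, List.getElem?_eq_none (hlen ▸ hi)]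

lemma InE.two_le_of_C_mem {P : List Step} (hP : InE P) {k : ℕ} (hk : Step.C k ∈ P) :
    2 ≤ k := by
  obtain ⟨i, hi⟩ := List.mem_iff_getElem?.1 hk
  exact (hP.2.2 i k hi).1

lemma InE.hgt_nonneg_of_append {L M : List Step} (hP : InE (L ++ M)) (i : ℕ) :
    0 ≤ hgt L i := by
  rcases le_total i L.length with hi | hi
  · rw [← hgt_append_of_le_length hi]
    exact hP.1 i
  · rw [hgt_of_length_le hi, ← hgt_of_length_le le_rfl, ← hgt_append_of_le_length le_rfl]
    exact hP.1 _

lemma InE.exists_last_eq_cfin {L : List Step} {s : Step} (hP : InE (L ++ [s])) :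
    ∃ k : ℕ, 1 ≤ k ∧ (L.map Step.val).sum = k ∧ s = cfin k := by
  have hend : (L.map Step.val).sum + s.val = 0 := by
    simpa [hgt_of_length_le] using hP.2.1
  have hstart : hgt (L ++ [s]) L.length = (L.map Step.val).sum := by
    rw [hgt_append_of_le_length le_rfl, hgt_of_length_le le_rfl]
  cases s with
  | U => have := hP.1 L.length; simp [Step.val] at hend; omega
  | D => exact ⟨1, le_rfl, by simp [Step.val] at hend; omega, rfl⟩
  | C k =>
    obtain ⟨hk, hkh⟩ := hP.2.2 L.length k (by simp)
    refine ⟨k, by omega, by rw [← hstart, hkh], ?_⟩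
    simp [cfin, show k ≠ 1 by omega]

lemma InA.catCount_init_eq_zero {L : List Step} {s : Step} (hA : InA (L ++ [s])) :
    catCount L = 0 := by
  have hcount : catCount (L ++ [s]) = catCount L + catCount [s] := List.countP_append
  rcases hA.2 with h0 | ⟨h1, k, -, hk⟩
  · omega
  · obtain rfl : s = Step.C k := by simpa using hk
    have : catCount [Step.C k] = 1 := rfl
    omega

lemma InA.eq_of_uEquiv {Q Q' : List Step} (hQ : InA Q) (hQ' : InA Q')
    (hlen : Q.length = Q'.length) (h : UEquiv Q Q') : Q = Q' := by
  rcases Q.eq_nil_or_concat' with rfl | ⟨L, s, rfl⟩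
  · exact (List.length_eq_zero_iff.1 hlen.symm).symm
  rcases Q'.eq_nil_or_concat' with rfl | ⟨L', s', rfl⟩
  · simp at hlen
  have hlen' : L.length = L'.length := by simpa using hlen
  have hL : L = L' := by
    have hUL : UEquiv L L' := by
      have := h.take L.length
      rwa [List.take_left' rfl, List.take_left' hlen'.symm] at this
    rw [← map_toDyck_eq_self hQ.catCount_init_eq_zero,
      ← map_toDyck_eq_self hQ'.catCount_init_eq_zero]
    exact map_toDyck_eq_of_uEquiv hUL hlen'
  subst hL
  obtain ⟨k, -, hk, rfl⟩ := hQ.1.exists_last_eq_cfin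
  obtain ⟨k', -, hk', rfl⟩ := hQ'.1.exists_last_eq_cfin
  obtain rfl : k = k' := by omega
  rfl

lemma inA_append_cfin {R : List Step} (hR : catCount R = 0) (hpos : ∀ i, 0 ≤ hgt R i)
    {k : ℕ} (hk : 1 ≤ k) (hsum : (R.map Step.val).sum = k) : InA (R ++ [cfin k]) := by
  have hend : ∀ i, R.length < i → hgt (R ++ [cfin k]) i = 0 := fun i hi => by
    rw [hgt_of_length_le (by simpa using hi)]
    simp [hsum, Step.val_cfin]
  have hE : InE (R ++ [cfin k]) := by
    refine ⟨fun i => ?_, hend _ (by simp), fun i c hc => ?_⟩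
    · rcases le_or_gt i R.length with hi | hi
      · exact hgt_append_of_le_length hi ▸ hpos i
      · exact (hend i hi).ge
    · rcases lt_trichotomy i R.length with hi | rfl | hi
      · rw [List.getElem?_append_left hi] at hc
        exact absurd (List.mem_of_getElem? hc) (catCount_eq_zero_iff.1 hR c)
      · have hc : cfin k = Step.C c := by simpa using hc
        unfold cfin at hc
        split_ifs at hc with h1
        cases hc
        rw [hgt_append_of_le_length le_rfl, hgt_of_length_le le_rfl, hsum]
        exact ⟨by omega, rfl⟩
      · simp [List.getElem?_eq_none (by simpa using hi : (R ++ [cfin k]).length ≤ i)] at hc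
  refine ⟨hE, ?_⟩
  have hcount : catCount (R ++ [cfin k]) = catCount [cfin k] := by
    unfold catCount at hR ⊢
    rw [List.countP_append, hR, zero_add]
  unfold cfin at hcount ⊢
  split_ifs at hcount ⊢ with h1
  · exact Or.inl (hcount.trans rfl)
  · exact Or.inr ⟨hcount, k, by omega, by simp⟩

lemma exists_inA_uEquiv {P : List Step} (hP : InE P) :
    ∃ Q, InA Q ∧ Q.length = P.length ∧ UEquiv P Q := by
  rcases P.eq_nil_or_concat' with rfl | ⟨L, s, rfl⟩
  · exact ⟨[], ⟨hP, Or.inl rfl⟩, rfl, UEquiv.refl _⟩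
  obtain ⟨k, hk, hsum, rfl⟩ := hP.exists_last_eq_cfin
  have hnoC0 : Step.C 0 ∉ L := fun h =>
    absurd (hP.two_le_of_C_mem (List.mem_append_left _ h)) (by omega)
  have hpos : ∀ i, 0 ≤ hgt (L.map Step.toDyck) i := fun i =>
    (hP.hgt_nonneg_of_append i).trans (hgt_le_hgt_map_toDyck hnoC0 i)
  obtain ⟨m, hm⟩ : ∃ m : ℕ, ((L.map Step.toDyck).map Step.val).sum = m :=
    ⟨_, (Int.toNat_of_nonneg (hgt_of_length_le le_rfl ▸ hpos _)).symm⟩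
  have hkm : k ≤ m := by
    have := hgt_le_hgt_map_toDyck hnoC0 L.length
    rw [hgt_of_length_le le_rfl, hgt_of_length_le (by simp), hsum, hm] at this
    omega
  refine ⟨L.map Step.toDyck ++ [cfin m],
    inA_append_cfin (catCount_map_toDyck L) hpos (by omega) hm, by simp, ?_⟩
  exact (uEquiv_map_toDyck L).append (by simp) (.singleton (cfin_ne_U k) (cfin_ne_U m))

/-- 𝒜 is a complete set of representatives of the U-equivalence classes of ℰ. -/
theorem A_complete_set_of_representatives_for_UEquiv (P : List Step) (hP : InE P) :
    ∃! Q : List Step, InA Q ∧ Q.length = P.length ∧ UEquiv P Q := by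
  obtain ⟨Q, hQA, hQlen, hPQ⟩ := exists_inA_uEquiv hP
  refine ⟨Q, ⟨hQA, hQlen, hPQ⟩, fun Q' ⟨hQ'A, hQ'len, hPQ'⟩ => ?_⟩
  exact (hQA.eq_of_uEquiv hQ'A (hQlen.trans hQ'len.symm) (hPQ.symm.trans hPQ')).symm
end

section
/- Let ℬ = 𝒟 ∪ 𝒟″, where 𝒟″ is the set of paths in ℰ containing exactly one catastrophe step C_k (for some k ≥ 2), possibly followed by further steps. Then for every path P ∈ ℰ there exists exactly one path Q ∈ ℬ with |Q| = |P| such that P and Q are D-equivalent. In other words, ℬ is a complete set of representatives of the D-equivalence classes of ℰ. -/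
/-- Two paths are `D`-equivalent when their down-steps occur at the same positions. -/
def DEquiv (P Q : List Step) : Prop :=
  ∀ i : ℕ, P[i]? = some Step.D ↔ Q[i]? = some Step.D

/-- Membership in ℬ = 𝒟 ∪ 𝒟″ : either a Dyck path (no catastrophe), or a path of ℰ
containing exactly one catastrophe step. -/
def InB (P : List Step) : Prop :=
  InE P ∧ (catCount P = 0 ∨ catCount P = 1)

/-! D-equivalence only sees the U/D word `M` of a path, obtained by turning every step other
than `D` into `U`: two paths are D-equivalent iff they have the same word. For `P ∈ ℰ`, the word
`M` stays weakly above `P` and ends at height `h = ∑ (k + 1)` over the catastrophes `C k` of `P`,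
so `h = 0` or `h ≥ 3`. A path of ℬ with word `M` is either `M` itself, which lies in ℰ exactly
when `h = 0`, or `M` with one `U` replaced by some `C m`. Ending on the axis forces `m = h - 1`,
and staying above it forces the replaced step to start at the last time `M` is below height `h`;
conversely that replacement does give a path of ℰ when `h ≥ 3`. -/

namespace Step

def toUD : Step → Step
  | U => U
  | D => D
  | C _ => U

@[simp] lemma toUD_U : toUD U = U := rfl

@[simp] lemma toUD_D : toUD D = D := rfl

@[simp] lemma toUD_C (k : ℕ) : toUD (C k) = U := rfl

lemma toUD_eq_toUD_iff {s t : Step} : toUD s = toUD t ↔ (s = D ↔ t = D) := by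
  cases s <;> cases t <;> simp

lemma toUD_eq_self_iff {s : Step} : toUD s = s ↔ isCatB s = false := by
  cases s <;> simp [isCatB]

lemma isCatB_toUD (s : Step) : isCatB (toUD s) = false := by
  cases s <;> rfl

lemma val_le_val_toUD (s : Step) : s.val ≤ (toUD s).val := by
  cases s <;> simp [val]

lemma val_le_one (s : Step) : s.val ≤ 1 := by
  cases s <;> simp [val]

lemma eq_U_of_one_le_val {s : Step} (h : 1 ≤ s.val) : s = U := by
  cases s <;> simp_all [val]; omega

end Step

open Step

lemma sum_eq_zero_or_le_sum {α : Type*} [AddCommMonoid α] [PartialOrder α]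
    [IsOrderedAddMonoid α] {l : List α} {c : α} (hc : 0 ≤ c)
    (h : ∀ x ∈ l, x = 0 ∨ c ≤ x) : l.sum = 0 ∨ c ≤ l.sum := by
  induction l with
  | nil => simp
  | cons a t ih =>
    rw [List.sum_cons]
    obtain ha | ha := h a List.mem_cons_self
    · simpa [ha] using ih fun x hx => h x (List.mem_cons_of_mem a hx)
    · obtain ht | ht := ih fun x hx => h x (List.mem_cons_of_mem a hx)
      · simp [ht, ha]
      · exact Or.inr (le_add_of_nonneg_of_le (hc.trans ha) ht)

section Height

variable (l : List Step)

@[simp] lemma hgt_zero : hgt l 0 = 0 := by simp [hgt]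

lemma hgt_succ {i : ℕ} (hi : i < l.length) : hgt l (i + 1) = hgt l i + l[i].val := by
  rw [hgt, hgt, List.take_add_one, List.getElem?_eq_getElem hi, List.map_append, List.sum_append]
  simp

lemma hgt_of_length_le_s2 {i : ℕ} (hi : l.length ≤ i) : hgt l i = hgt l l.length := by
  simp [hgt, List.take_of_length_le hi]

lemma hgt_succ_le (i : ℕ) : hgt l (i + 1) ≤ hgt l i + 1 := by
  rcases lt_or_ge i l.length with hi | hi
  · rw [hgt_succ l hi]
    linarith [l[i].val_le_one]
  · rw [hgt_of_length_le_s2 l hi, hgt_of_length_le_s2 l (by omega)]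
    linarith

lemma hgt_set_of_le {i j : ℕ} (s : Step) (h : i ≤ j) : hgt (l.set j s) i = hgt l i := by
  simp [hgt, List.take_set_of_le h]

lemma hgt_set_of_lt {i j : ℕ} (s : Step) (hji : j < i) (hj : j < l.length) :
    hgt (l.set j s) i = hgt l i + s.val - l[j].val := by
  have hj' : j < (l.take i).length := by rw [List.length_take]; omega
  have hl : l.take i = (l.take i).set j l[j] := by
    simpa using (List.set_getElem_self hj').symm
  rw [hgt, hgt, List.take_set, List.map_set]
  conv_rhs => rw [hl, List.map_set]
  simp only [List.sum_set, List.length_map, if_pos hj']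
  ring

lemma hgt_map_toUD (i : ℕ) :
    hgt (l.map toUD) i = hgt l i + ((l.take i).map fun s => (toUD s).val - s.val).sum := by
  rw [hgt, hgt, ← List.sum_map_add, ← List.map_take, List.map_map]
  congr 2
  funext s
  simp

lemma hgt_le_hgt_map_toUD (i : ℕ) : hgt l i ≤ hgt (l.map toUD) i := by
  rw [hgt_map_toUD, le_add_iff_nonneg_right]
  refine List.sum_nonneg fun x hx => ?_
  obtain ⟨s, -, rfl⟩ := List.mem_map.mp hx
  linarith [val_le_val_toUD s]

end Height

lemma map_toUD_eq_map_toUD_iff {P Q : List Step} :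
    P.map toUD = Q.map toUD ↔ P.length = Q.length ∧ DEquiv P Q := by
  simp only [List.ext_getElem_iff, List.length_map, List.getElem_map, toUD_eq_toUD_iff, DEquiv]
  refine and_congr_right fun hl => ⟨fun h i => ?_, fun h i hP hQ => ?_⟩
  · rcases lt_or_ge i P.length with hi | hi
    · simp [List.getElem?_eq_getElem hi, List.getElem?_eq_getElem (hl ▸ hi), h i hi (hl ▸ hi)]
    · simp [List.getElem?_eq_none hi, List.getElem?_eq_none (hl ▸ hi)]
  · simpa [List.getElem?_eq_getElem hP, List.getElem?_eq_getElem hQ] using h i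

lemma map_toUD_eq_self {l : List Step} (h : catCount l = 0) : l.map toUD = l := by
  rw [catCount, List.countP_eq_zero] at h
  calc l.map toUD = l.map id :=
        List.map_congr_left fun s hs => toUD_eq_self_iff.mpr (by simpa using h s hs)
    _ = l := List.map_id l

lemma getElem?_ne_C_of_catCount_eq_zero {l : List Step} (h : catCount l = 0) (i k : ℕ) :
    l[i]? ≠ some (C k) := fun hi =>
  absurd rfl (List.countP_eq_zero.mp h _ (List.mem_of_getElem? hi))

lemma catCount_map_toUD (l : List Step) : catCount (l.map toUD) = 0 := by
  simp [catCount, List.countP_map, Function.comp_def, isCatB_toUD]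

lemma catCount_set_C {l : List Step} (h : catCount l = 0) {j : ℕ} (hj : j < l.length) (k : ℕ) :
    catCount (l.set j (C k)) = 1 := by
  have hlj : isCatB l[j] = false := by
    simpa using List.countP_eq_zero.mp h l[j] (List.getElem_mem hj)
  rw [catCount, List.countP_set hj, ← catCount, h, hlj]
  rfl

lemma exists_eq_set_of_catCount_eq_one {Q : List Step} (h : catCount Q = 1) :
    ∃ j m, Q[j]? = some (C m) ∧ Q = (Q.map toUD).set j (C m) := by
  rw [catCount, List.countP_eq_length_filter, List.length_eq_one_iff] at h
  obtain ⟨a, ha⟩ := h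
  obtain ⟨l₁, l₂, rfl, h₁, ha, h₂⟩ := List.filter_eq_cons_iff.mp ha
  obtain ⟨m, rfl⟩ : ∃ m, a = C m := by cases a <;> simp_all [isCatB]
  have h₁ : catCount l₁ = 0 := List.countP_eq_zero.mpr h₁
  have h₂ : catCount l₂ = 0 := by
    rwa [catCount, List.countP_eq_length_filter, List.length_eq_zero_iff]
  refine ⟨l₁.length, m, by simp, ?_⟩
  simp [map_toUD_eq_self h₁, map_toUD_eq_self h₂, List.set_append_right]

/-- The last time the U/D word `M` is strictly below its final height `h`: the only place where
`M` can carry a catastrophe, necessarily `C (h - 1)`, and stay in ℰ. -/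
def IsCatastropheSite (M : List Step) (j : ℕ) : Prop :=
  hgt M j + 1 = hgt M M.length ∧ ∀ i, j < i → i ≤ M.length → hgt M M.length ≤ hgt M i

namespace IsCatastropheSite

variable {M : List Step} {j : ℕ}

lemma lt_length (hj : IsCatastropheSite M j) : j < M.length := by
  by_contra h
  linarith [hj.1, hgt_of_length_le_s2 M (not_lt.mp h)]

lemma getElem_eq_U (hj : IsCatastropheSite M j) : M[j]'hj.lt_length = U :=
  eq_U_of_one_le_val <| by
    linarith [hj.1, hj.2 (j + 1) (lt_add_one j) hj.lt_length, hgt_succ M hj.lt_length]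

lemma unique {j' : ℕ} (hj : IsCatastropheSite M j) (hj' : IsCatastropheSite M j') : j = j' := by
  by_contra hne
  rcases Nat.lt_or_gt_of_ne hne with h | h
  · linarith [hj.2 j' h hj'.lt_length.le, hj'.1]
  · linarith [hj'.2 j h hj.lt_length.le, hj.1]

lemma inE_set {k : ℕ} (hM : catCount M = 0) (hnn : ∀ i, 0 ≤ hgt M i)
    (hj : IsCatastropheSite M j) (hk : (k : ℤ) + 1 = hgt M M.length) (hk2 : 2 ≤ k) :
    InE (M.set j (C k)) := by
  have hjl := hj.lt_length
  have hlow : ∀ i, i ≤ j → hgt (M.set j (C k)) i = hgt M i := fun i hi => hgt_set_of_le M _ hi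
  have hhigh : ∀ i, j < i → hgt (M.set j (C k)) i = hgt M i - hgt M M.length := by
    intro i hi
    rw [hgt_set_of_lt M _ hi hjl, hj.getElem_eq_U]
    simp only [val]
    linarith
  refine ⟨fun i => ?_, ?_, fun i c hc => ?_⟩
  · rcases le_or_gt i j with hi | hi
    · rw [hlow i hi]
      exact hnn i
    · rcases le_or_gt i M.length with hiN | hiN
      · rw [hhigh i hi]
        linarith [hj.2 i hi hiN]
      · rw [hgt_of_length_le_s2 _ (by rw [List.length_set]; omega), List.length_set, hhigh _ hjl,
          sub_self]
  · rw [List.length_set, hhigh _ hjl, sub_self]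
  · by_cases hij : i = j
    · subst hij
      obtain rfl : c = k := by simpa [hjl] using hc.symm
      exact ⟨hk2, by rw [hlow i le_rfl]; linarith [hj.1]⟩
    · rw [List.getElem?_set_ne (Ne.symm hij)] at hc
      exact absurd hc (getElem?_ne_C_of_catCount_eq_zero hM i c)

end IsCatastropheSite

lemma exists_isCatastropheSite {M : List Step} (h : 0 < hgt M M.length) :
    ∃ j, IsCatastropheSite M j := by
  classical
  set j := Nat.findGreatest (fun i => hgt M i < hgt M M.length) M.length
  have hj : hgt M j < hgt M M.length :=
    Nat.findGreatest_spec (P := fun i => hgt M i < hgt M M.length) (Nat.zero_le _)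
      (by simpa using h)
  have hjN : j < M.length := lt_of_le_of_ne (Nat.findGreatest_le _) fun h => by
    rw [h] at hj
    exact lt_irrefl _ hj
  have habove : ∀ i, j < i → i ≤ M.length → hgt M M.length ≤ hgt M i :=
    fun i h₁ h₂ => not_lt.mp (Nat.findGreatest_is_greatest h₁ h₂)
  refine ⟨j, ?_, habove⟩
  have := habove (j + 1) (lt_add_one j) hjN
  have := hgt_succ_le M j
  omega

lemma isCatastropheSite_of_inE_set {M : List Step} {j m : ℕ} (hjU : M[j]? = some U)
    (hQ : InE (M.set j (C m))) :
    IsCatastropheSite M j ∧ (m : ℤ) + 1 = hgt M M.length ∧ 2 ≤ m := by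
  obtain ⟨hjl, hU⟩ := List.getElem?_eq_some_iff.mp hjU
  obtain ⟨hnn, hend, hcat⟩ := hQ
  obtain ⟨hm2, hmj⟩ := hcat j m (by simp [hjl])
  have hhigh : ∀ i, j < i → hgt (M.set j (C m)) i = hgt M i - (m + 1) := by
    intro i hi
    rw [hgt_set_of_lt M _ hi hjl, hU]
    simp only [val]
    ring
  rw [hgt_set_of_le M _ le_rfl] at hmj
  rw [List.length_set, hhigh _ hjl] at hend
  exact ⟨⟨by linarith, fun i hi _ => by linarith [hnn i, hhigh i hi]⟩, by linarith, hm2⟩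

lemma eq_or_eq_set_of_inB {Q M : List Step} (hQ : InB Q) (hQM : Q.map toUD = M) :
    Q = M ∨ ∃ j m, Q = M.set j (C m) ∧ IsCatastropheSite M j ∧
      (m : ℤ) + 1 = hgt M M.length ∧ 2 ≤ m := by
  obtain ⟨hQE, h0 | h1⟩ := hQ
  · exact Or.inl (hQM ▸ (map_toUD_eq_self h0).symm)
  · obtain ⟨j, m, hj, hQ⟩ := exists_eq_set_of_catCount_eq_one h1
    have hjU : M[j]? = some U := by simp [← hQM, hj]
    rw [hQM] at hQ
    exact Or.inr ⟨j, m, hQ, isCatastropheSite_of_inE_set hjU (hQ ▸ hQE)⟩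

section Representatives

variable {M : List Step}

lemma existsUnique_inB_map_toUD_eq_of_hgt_eq_zero (hM : catCount M = 0)
    (hnn : ∀ i, 0 ≤ hgt M i) (h0 : hgt M M.length = 0) :
    ∃! Q, InB Q ∧ Q.map toUD = M := by
  refine ⟨M, ⟨⟨⟨hnn, h0, fun i k hk => ?_⟩, Or.inl hM⟩, map_toUD_eq_self hM⟩, ?_⟩
  · exact absurd hk (getElem?_ne_C_of_catCount_eq_zero hM i k)
  · rintro Q ⟨hQ, hQM⟩
    rcases eq_or_eq_set_of_inB hQ hQM with rfl | ⟨j, m, -, -, hm, -⟩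
    · rfl
    · omega

lemma existsUnique_inB_map_toUD_eq_of_three_le_hgt (hM : catCount M = 0)
    (hnn : ∀ i, 0 ≤ hgt M i) (h3 : 3 ≤ hgt M M.length) :
    ∃! Q, InB Q ∧ Q.map toUD = M := by
  obtain ⟨j, hj⟩ := exists_isCatastropheSite (M := M) (by omega)
  set k := (hgt M M.length - 1).toNat
  have hk : (k : ℤ) + 1 = hgt M M.length := by omega
  refine ⟨M.set j (C k), ⟨⟨hj.inE_set hM hnn hk (by omega),
    Or.inr (catCount_set_C hM hj.lt_length k)⟩, ?_⟩, ?_⟩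
  · rw [List.map_set, map_toUD_eq_self hM, toUD_C, ← hj.getElem_eq_U, List.set_getElem_self]
  · rintro Q ⟨hQ, hQM⟩
    rcases eq_or_eq_set_of_inB hQ hQM with rfl | ⟨j', m, rfl, hj', hm, -⟩
    · have := hQ.1.2.1
      omega
    · obtain rfl := hj'.unique hj
      obtain rfl : m = k := by omega
      rfl

lemma existsUnique_inB_map_toUD_eq (hM : catCount M = 0) (hnn : ∀ i, 0 ≤ hgt M i)
    (hend : hgt M M.length = 0 ∨ 3 ≤ hgt M M.length) :
    ∃! Q, InB Q ∧ Q.map toUD = M :=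
  hend.elim (existsUnique_inB_map_toUD_eq_of_hgt_eq_zero hM hnn)
    (existsUnique_inB_map_toUD_eq_of_three_le_hgt hM hnn)

end Representatives

namespace InE

variable {P : List Step}

lemma hgt_map_toUD_nonneg (hP : InE P) (i : ℕ) : 0 ≤ hgt (P.map toUD) i :=
  (hP.1 i).trans (hgt_le_hgt_map_toUD P i)

lemma hgt_map_toUD_length (hP : InE P) :
    hgt (P.map toUD) (P.map toUD).length = 0 ∨ 3 ≤ hgt (P.map toUD) (P.map toUD).length := by
  rw [List.length_map, hgt_map_toUD, hP.2.1, zero_add, List.take_length]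
  refine sum_eq_zero_or_le_sum (by norm_num) fun x hx => ?_
  obtain ⟨s, hs, rfl⟩ := List.mem_map.mp hx
  cases s with
  | U => simp
  | D => simp
  | C k =>
    obtain ⟨i, hi⟩ := List.getElem?_of_mem hs
    have := (hP.2.2 i k hi).1
    simp only [toUD_C, val]
    omega

end InE

/-- ℬ is a complete set of representatives of the D-equivalence classes of ℰ. -/
theorem B_complete_set_of_representatives_for_DEquiv (P : List Step) (hP : InE P) :
    ∃! Q : List Step, InB Q ∧ Q.length = P.length ∧ DEquiv P Q := by
  have hrep := existsUnique_inB_map_toUD_eq (catCount_map_toUD P) hP.hgt_map_toUD_nonneg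
    hP.hgt_map_toUD_length
  refine (existsUnique_congr fun Q => ?_).mp hrep
  rw [eq_comm, map_toUD_eq_map_toUD_iff, eq_comm (a := P.length)]
end

section
/- Let ℱ be the set of paths in ℰ of the form (i) (UD)^k for some k ≥ 0, or (ii) (UD)^{ℓ_0}U^{k_1}α_1U^{k_2}α_2⋯U^{k_r}α_r where r ≥ 1, ℓ_0 ≥ 0, k_i ≥ 2 for 1 ≤ i ≤ r, each α_i with 1 ≤ i ≤ r−1 is either (DU)^kD or (DU)^kDD for some k ≥ 0, and α_r is either (DU)^kC_s or (DU)^kDC_s for some k ≥ 0, where s ≥ 1 is such that the path ends on the x-axis (with the convention C_1 = D). Then for every path P ∈ ℰ there exists exactly one path Q ∈ ℱ with |Q| = |P| such that P and Q are UU-equivalent. In other words, ℱ is a complete set of representatives of the UU-equivalence classes of ℰ. -/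
/-- Two paths are `UU`-equivalent when the occurrences of the pattern `UU`
appear at the same positions in both paths. -/
def UUEquiv (P Q : List Step) : Prop :=
  ∀ i : ℕ, (P[i]? = some Step.U ∧ P[i + 1]? = some Step.U) ↔
    (Q[i]? = some Step.U ∧ Q[i + 1]? = some Step.U)

/-- Membership in ℱ : either `(UD)^k`, or
`(UD)^{ℓ_0} U^{k_1} α_1 U^{k_2} α_2 ⋯ U^{k_r} α_r` where `r ≥ 1`, all `k_i ≥ 2`,
each `α_i` (`1 ≤ i ≤ r-1`) is `(DU)^k D` or `(DU)^k DD` for some `k ≥ 0`, and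
`α_r` is `(DU)^k C_s` or `(DU)^k D C_s` for some `k ≥ 0` and `s ≥ 1` (with the
convention `C_1 = D`). The middle blocks are encoded by a list of triples
`(kᵢ, k, b)` where `b` tells whether `α_i` ends with one or two `D`-steps. -/
def InF (P : List Step) : Prop :=
  (∃ k, P = UDpow k) ∨
  ∃ (l0 : ℕ) (mids : List (ℕ × ℕ × Bool)) (kr m s : ℕ) (b : Bool),
    (∀ t ∈ mids, 2 ≤ t.1) ∧ 2 ≤ kr ∧ 1 ≤ s ∧
    P = UDpow l0 ++
      (mids.map (fun t => Upow t.1 ++ DUpow t.2.1 ++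
        (if t.2.2 then [Step.D, Step.D] else [Step.D]))).flatten ++
      Upow kr ++ DUpow m ++ (if b then [Step.D, cfin s] else [cfin s])

/-
Cut a word at its maximal runs of at least two up-steps. The occurrences of `UU` are exactly the
positions of these runs other than their last steps, so up to `UU`-equivalence a word of given
length only remembers where its runs start and how long they are. A path of `ℱ` fills the gaps
between the runs with the rigid words `(UD)^ℓ`, `(DU)^j D`, `(DU)^j DD` and ends with the one step
`C_s` that brings it back to the x-axis; so runs and gap lengths determine it, which gives
uniqueness. For existence, the part of a path of `ℰ` before its first `UU` alternates between
heights `0` and `1`, hence already is `(UD)^ℓ`; replacing every later gap by the rigid word of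
the same length keeps the path above the x-axis, since each gap descends by at most `2` and each
run climbs by at least `2`.
-/

section

open Step

lemma UDpow_succ (n : ℕ) : UDpow (n + 1) = U :: D :: UDpow n := by
  simp [UDpow, List.replicate_succ]

lemma UDpow_succ' (n : ℕ) : UDpow (n + 1) = UDpow n ++ [U, D] := by
  simp [UDpow, List.replicate_succ']

lemma DUpow_succ (n : ℕ) : DUpow (n + 1) = D :: U :: DUpow n := by
  simp [DUpow, List.replicate_succ]

@[simp] lemma length_UDpow (n : ℕ) : (UDpow n).length = 2 * n := by
  simp [UDpow, mul_comm]

@[simp] lemma length_DUpow (n : ℕ) : (DUpow n).length = 2 * n := by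
  simp [DUpow, mul_comm]

@[simp] lemma length_Upow (k : ℕ) : (Upow k).length = k := List.length_replicate

lemma cfin_ne_U_s6 (s : ℕ) : cfin s ≠ U := by
  unfold cfin; split <;> simp

@[simp] lemma val_cfin (s : ℕ) : (cfin s).val = -(s : ℤ) := by
  unfold cfin; split <;> simp_all [Step.val]

def gapWord (j : ℕ) (b : Bool) (x : Step) : List Step :=
  DUpow j ++ if b then [D, x] else [x]

@[simp] lemma length_gapWord (j : ℕ) (b : Bool) (x : Step) :
    (gapWord j b x).length = 2 * j + b.toNat + 1 := by
  cases b <;> simp [gapWord]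

lemma gapWord_ne_nil (j : ℕ) (b : Bool) (x : Step) : gapWord j b x ≠ [] := by
  simp [← List.length_pos_iff]

lemma eq_of_length_gapWord_eq {j j' : ℕ} {b b' : Bool} {x x' : Step}
    (h : (gapWord j b x).length = (gapWord j' b' x').length) : j = j' ∧ b = b' := by
  cases b <;> cases b' <;> simp at h ⊢ <;> omega

lemma exists_length_gapWord_eq {L : ℕ} (hL : 1 ≤ L) :
    ∃ j b, ∀ x, (gapWord j b x).length = L := by
  obtain ⟨j, rfl | rfl⟩ := Nat.even_or_odd' L
  · exact ⟨j - 1, true, fun x => by simp; omega⟩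
  · exact ⟨j, false, fun x => by simp⟩

/-- The path `U^{k_1} α_1 ⋯ U^{k_r} α_r` of `ℱ` without its last step, where `mids` lists the
triples `(k_i, j, b)` with `α_i = gapWord j b D` (`i < r`), and `α_r = gapWord m b (cfin s)`. -/
def catBody : List (ℕ × ℕ × Bool) → ℕ → ℕ → Bool → List Step
  | [], kr, m, b => Upow kr ++ DUpow m ++ if b then [D] else []
  | t :: mids, kr, m, b => Upow t.1 ++ gapWord t.2.1 t.2.2 D ++ catBody mids kr m b

def Admissible (mids : List (ℕ × ℕ × Bool)) (kr : ℕ) : Prop :=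
  (∀ t ∈ mids, 2 ≤ t.1) ∧ 2 ≤ kr

lemma admissible_cons {t : ℕ × ℕ × Bool} {mids : List (ℕ × ℕ × Bool)} {kr : ℕ} :
    Admissible (t :: mids) kr ↔ 2 ≤ t.1 ∧ Admissible mids kr := by
  simp [Admissible, and_assoc]

lemma catBody_nil_append (kr m : ℕ) (b : Bool) (x : Step) :
    catBody [] kr m b ++ [x] = Upow kr ++ gapWord m b x := by
  cases b <;> simp [catBody, gapWord]

lemma catBody_cons_append (t : ℕ × ℕ × Bool) (mids : List (ℕ × ℕ × Bool)) (kr m : ℕ)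
    (b : Bool) (x : Step) :
    catBody (t :: mids) kr m b ++ [x] =
      Upow t.1 ++ (gapWord t.2.1 t.2.2 D ++ (catBody mids kr m b ++ [x])) := by
  simp [catBody]

lemma inF_iff {Q : List Step} :
    InF Q ↔ (∃ k, Q = UDpow k) ∨
      ∃ (l0 : ℕ) (mids : List (ℕ × ℕ × Bool)) (kr m s : ℕ) (b : Bool),
        Admissible mids kr ∧ 1 ≤ s ∧ Q = UDpow l0 ++ (catBody mids kr m b ++ [cfin s]) := by
  have blocks : ∀ (mids : List (ℕ × ℕ × Bool)) (kr m s : ℕ) (b : Bool),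
      (mids.map fun t => Upow t.1 ++ (DUpow t.2.1 ++ if t.2.2 then [D, D] else [D])).flatten ++
        (Upow kr ++ (DUpow m ++ if b then [D, cfin s] else [cfin s])) =
      catBody mids kr m b ++ [cfin s] := by
    intro mids kr m s b
    induction mids with
    | nil => cases b <;> simp [catBody]
    | cons t mids ih => simp [catBody, gapWord, ← ih]
  simp only [InF, Admissible, List.append_assoc, blocks, and_assoc]

def UUAt (w : List Step) (i : ℕ) : Prop := w[i]? = some U ∧ w[i + 1]? = some U

def UUFree (w : List Step) : Prop := ∀ i, ¬ UUAt w i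

lemma UUEquiv.refl (P : List Step) : UUEquiv P P := fun _ => Iff.rfl

lemma UUEquiv.symm {P Q : List Step} (h : UUEquiv P Q) : UUEquiv Q P := fun i => (h i).symm

lemma UUEquiv.trans {P Q R : List Step} (h : UUEquiv P Q) (h' : UUEquiv Q R) : UUEquiv P R :=
  fun i => (h i).trans (h' i)

lemma uuEquiv_of_uuFree {P Q : List Step} (hP : UUFree P) (hQ : UUFree Q) : UUEquiv P Q :=
  fun i => iff_of_false (hP i) (hQ i)

lemma lt_length_of_uuAt {w : List Step} {i : ℕ} (h : UUAt w i) : i + 1 < w.length :=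
  (List.getElem?_eq_some_iff.1 h.2).1

lemma uuAt_drop {w : List Step} {d i : ℕ} : UUAt (w.drop d) i ↔ UUAt w (d + i) := by
  simp [UUAt, add_assoc]

lemma uuAt_take {w : List Step} {n i : ℕ} : UUAt (w.take n) i ↔ UUAt w i ∧ i + 1 < n := by
  unfold UUAt
  rw [List.getElem?_take, List.getElem?_take]
  split_ifs <;> simp_all
  omega

lemma exists_first_uuAt {w : List Step} (h : ∃ i, UUAt w i) :
    ∃ a, UUAt w a ∧ ∀ j < a, ¬ UUAt w j := by
  classical
  exact ⟨_, Nat.find_spec h, fun j => Nat.find_min h⟩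

lemma uuFree_take_of_first_uuAt {w : List Step} {a : ℕ} (hmin : ∀ j < a, ¬ UUAt w j) :
    UUFree (w.take a) :=
  fun i hi => hmin i (by have := (uuAt_take.1 hi).2; omega) (uuAt_take.1 hi).1

lemma getLast?_take_ne_U_of_first_uuAt {w : List Step} {a : ℕ} (ha : UUAt w a)
    (hmin : ∀ j < a, ¬ UUAt w j) : (w.take a).getLast? ≠ some U := by
  have hlt := lt_length_of_uuAt ha
  rcases a with _ | a
  · simp
  · intro h
    rw [List.getLast?_eq_getElem?, List.getElem?_take, List.length_take,
      Nat.min_eq_left (by omega), if_pos (by omega), Nat.add_sub_cancel] at h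
    exact hmin a (by omega) ⟨h, ha.1⟩

lemma uuAt_append {v w : List Step} (h : ¬ (v.getLast? = some U ∧ w.head? = some U)) (i : ℕ) :
    UUAt (v ++ w) i ↔ UUAt v i ∨ (v.length ≤ i ∧ UUAt w (i - v.length)) := by
  rw [List.getLast?_eq_getElem?, List.head?_eq_getElem?] at h
  unfold UUAt
  rcases lt_trichotomy (i + 1) v.length with hi | hi | hi
  · rw [List.getElem?_append_left (by omega), List.getElem?_append_left hi]
    exact (or_iff_left (by omega)).symm
  · rw [List.getElem?_append_left (by omega), List.getElem?_append_right (by omega),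
      show i + 1 - v.length = 0 by omega, show i = v.length - 1 by omega,
      Nat.sub_add_cancel (by omega), List.getElem?_eq_none le_rfl]
    simp only [reduceCtorEq, and_false, false_or]
    exact iff_of_false h (by omega)
  · rw [List.getElem?_append_right (by omega), List.getElem?_append_right (by omega),
      List.getElem?_eq_none (show v.length ≤ i by omega),
      show i + 1 - v.length = i - v.length + 1 by omega]
    simp only [reduceCtorEq, false_and, false_or]
    exact (and_iff_right (by omega)).symm

lemma UUEquiv.append {v v' w w' : List Step} (hv : UUEquiv v v') (hlen : v.length = v'.length)
    (hw : UUEquiv w w') (h : ¬ (v.getLast? = some U ∧ w.head? = some U))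
    (h' : ¬ (v'.getLast? = some U ∧ w'.head? = some U)) : UUEquiv (v ++ w) (v' ++ w') := by
  intro i
  show UUAt _ i ↔ UUAt _ i
  rw [uuAt_append h, uuAt_append h', hlen]
  exact or_congr (hv i) (and_congr_right fun _ => hw _)

lemma uuAt_Upow {k i : ℕ} : UUAt (Upow k) i ↔ i + 2 ≤ k := by
  simp [UUAt, Upow, List.getElem?_replicate]
  omega

lemma uuFree_UDpow (n : ℕ) : UUFree (UDpow n) := by
  induction n with
  | zero => simp [UUFree, UUAt, UDpow]
  | succ n ih =>
    intro i
    rw [UDpow_succ, show U :: D :: UDpow n = [U, D] ++ UDpow n from rfl, uuAt_append (by simp)]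
    rintro (h | ⟨-, h⟩)
    · rcases i with _ | _ | i <;> simp [UUAt] at h
    · exact ih _ h

lemma uuFree_DUpow (n : ℕ) : UUFree (DUpow n) := by
  induction n with
  | zero => simp [UUFree, UUAt, DUpow]
  | succ n ih =>
    intro i
    rw [DUpow_succ, show D :: U :: DUpow n = [D, U] ++ DUpow n from rfl,
      uuAt_append (by cases n <;> simp [DUpow])]
    rintro (h | ⟨-, h⟩)
    · rcases i with _ | _ | i <;> simp [UUAt] at h
    · exact ih _ h

lemma getLast?_UDpow_ne_U (n : ℕ) : (UDpow n).getLast? ≠ some U := by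
  cases n <;> simp [UDpow]

lemma getLast?_gapWord (j : ℕ) (b : Bool) (x : Step) : (gapWord j b x).getLast? = some x := by
  cases b <;> simp [gapWord]

lemma head?_gapWord_ne_U {x : Step} (hx : x ≠ U) (j : ℕ) (b : Bool) :
    (gapWord j b x).head? ≠ some U := by
  cases j <;> cases b <;> simp [gapWord, DUpow, hx]

lemma head?_gapWord_append_ne_U {x : Step} (hx : x ≠ U) (j : ℕ) (b : Bool) (w : List Step) :
    (gapWord j b x ++ w).head? ≠ some U := by
  rw [List.head?_append_of_ne_nil _ (gapWord_ne_nil j b x)]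
  exact head?_gapWord_ne_U hx j b

lemma uuFree_gapWord {x : Step} (hx : x ≠ U) (j : ℕ) (b : Bool) : UUFree (gapWord j b x) := by
  intro i
  have hend : UUFree (if b then [D, x] else [x]) := by
    intro i
    cases b <;> rcases i with _ | _ | i <;> simp [UUAt, hx]
  rw [gapWord, uuAt_append (by cases b <;> simp [hx])]
  rintro (h | ⟨-, h⟩)
  · exact uuFree_DUpow j i h
  · exact hend _ h

lemma uuAt_glue {X T : List Step} (hX : UUFree X) (hXU : X.getLast? ≠ some U)
    (hT : T.head? ≠ some U) (k i : ℕ) :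
    UUAt (X ++ (Upow k ++ T)) i ↔
      (X.length ≤ i ∧ i + 2 ≤ X.length + k) ∨
        (X.length + k ≤ i ∧ UUAt T (i - (X.length + k))) := by
  rw [uuAt_append (fun h => hXU h.1), uuAt_append (fun h => hT h.2), uuAt_Upow, length_Upow,
    Nat.sub_sub]
  simp only [hX i, false_or]
  constructor
  · rintro ⟨hi, hk | ⟨hk, hT⟩⟩
    · exact Or.inl ⟨hi, by omega⟩
    · exact Or.inr ⟨by omega, hT⟩
  · rintro (⟨hi, hk⟩ | ⟨hi, hT⟩)
    · exact ⟨hi, Or.inl (by omega)⟩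
    · exact ⟨by omega, Or.inr ⟨by omega, hT⟩⟩

/-- In `X ++ U^k ++ T` the first `UU` sits at `|X|` and the first run has length `k`, so both
are read off the `UU`-occurrences. -/
lemma uuEquiv_glue_cancel {X X' T T' : List Step} {k k' : ℕ} (hk : 2 ≤ k) (hk' : 2 ≤ k')
    (hX : UUFree X) (hXU : X.getLast? ≠ some U) (hT : T.head? ≠ some U)
    (hX' : UUFree X') (hXU' : X'.getLast? ≠ some U) (hT' : T'.head? ≠ some U)
    (h : UUEquiv (X ++ (Upow k ++ T)) (X' ++ (Upow k' ++ T'))) :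
    X.length = X'.length ∧ k = k' ∧ UUEquiv T T' := by
  have e : ∀ i, _ ↔ _ := fun i =>
    (uuAt_glue hX hXU hT k i).symm.trans ((h i).trans (uuAt_glue hX' hXU' hT' k' i))
  have hlen : X.length = X'.length := by
    have h1 := (e X.length).1 (Or.inl ⟨le_rfl, by omega⟩)
    have h2 := (e X'.length).2 (Or.inl ⟨le_rfl, by omega⟩)
    rcases h1 with ⟨h1, _⟩ | ⟨h1, _⟩ <;> rcases h2 with ⟨h2, _⟩ | ⟨h2, _⟩ <;> omega
  have hkk : k = k' := by
    by_contra hne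
    rcases Nat.lt_or_gt_of_ne hne with hlt | hlt
    · rcases (e (X.length + k - 1)).2 (Or.inl ⟨by omega, by omega⟩) with ⟨_, h⟩ | ⟨h, _⟩ <;>
        omega
    · rcases (e (X.length + k' - 1)).1 (Or.inl ⟨by omega, by omega⟩) with ⟨_, h⟩ | ⟨h, _⟩ <;>
        omega
  refine ⟨hlen, hkk, fun j => ?_⟩
  have hj := e (X.length + k + j)
  rw [← hlen, ← hkk, Nat.add_sub_cancel_left] at hj
  constructor
  · intro hTj
    rcases hj.1 (Or.inr ⟨by omega, hTj⟩) with ⟨_, _⟩ | ⟨_, h⟩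
    · omega
    · exact h
  · intro hTj
    rcases hj.2 (Or.inr ⟨by omega, hTj⟩) with ⟨_, _⟩ | ⟨_, h⟩
    · omega
    · exact h

lemma uuAt_length_append_catBody {mids : List (ℕ × ℕ × Bool)} {kr : ℕ}
    (hA : Admissible mids kr) (m : ℕ) (b : Bool) {X : List Step} (hX : UUFree X)
    (hXU : X.getLast? ≠ some U) {x : Step} (hx : x ≠ U) :
    UUAt (X ++ (catBody mids kr m b ++ [x])) X.length := by
  cases mids with
  | nil =>
    rw [catBody_nil_append, uuAt_glue hX hXU (head?_gapWord_ne_U hx m b)]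
    exact Or.inl ⟨le_rfl, by have := hA.2; omega⟩
  | cons t mids =>
    rw [catBody_cons_append, uuAt_glue hX hXU (head?_gapWord_append_ne_U (by simp) _ _ _)]
    exact Or.inl ⟨le_rfl, by have := (admissible_cons.1 hA).1; omega⟩

lemma exists_eq_Upow_append (w : List Step) :
    ∃ k w', w = Upow k ++ w' ∧ w'.head? ≠ some U := by
  induction w with
  | nil => exact ⟨0, [], rfl, by simp⟩
  | cons x w ih =>
    by_cases hx : x = U
    · obtain ⟨k, w', rfl, hw'⟩ := ih
      exact ⟨k + 1, w', by simp [hx, Upow, List.replicate_succ], hw'⟩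
    · exact ⟨0, x :: w, rfl, by simpa using hx⟩

lemma exists_eq_Upow_append_of_uuAt_zero {w : List Step} (h0 : UUAt w 0)
    (hlast : w.getLast? ≠ some U) :
    ∃ k w', 2 ≤ k ∧ w = Upow k ++ w' ∧ w'.head? ≠ some U ∧ w' ≠ [] ∧ w'.getLast? ≠ some U := by
  obtain ⟨k, w', rfl, hw'⟩ := exists_eq_Upow_append w
  have hk : 2 ≤ k := by
    rcases (uuAt_append (fun h => hw' h.2) 0).1 h0 with h | ⟨-, h⟩
    · exact uuAt_Upow.1 h
    · exact absurd (by simpa [List.head?_eq_getElem?] using h.1) hw'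
  have hw'ne : w' ≠ [] := by
    rintro rfl
    exact hlast (by simp [Upow, List.getLast?_replicate]; omega)
  exact ⟨k, w', hk, rfl, hw', hw'ne, by rwa [List.getLast?_append_of_ne_nil _ hw'ne] at hlast⟩

def height (w : List Step) : ℤ := (w.map Step.val).sum

@[simp] lemma height_nil : height [] = 0 := rfl

@[simp] lemma height_cons (x : Step) (w : List Step) : height (x :: w) = x.val + height w := by
  simp [height]

@[simp] lemma height_append (v w : List Step) : height (v ++ w) = height v + height w := by
  simp [height]

@[simp] lemma height_UDpow (n : ℕ) : height (UDpow n) = 0 := by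
  induction n with
  | zero => rfl
  | succ n ih => simp [UDpow_succ, ih, Step.val]

@[simp] lemma height_DUpow (n : ℕ) : height (DUpow n) = 0 := by
  induction n with
  | zero => rfl
  | succ n ih => simp [DUpow_succ, ih, Step.val]

@[simp] lemma height_Upow (k : ℕ) : height (Upow k) = k := by
  induction k with
  | zero => rfl
  | succ k ih =>
    rw [Upow, List.replicate_succ, height_cons, ← Upow, ih, Step.val]
    push_cast
    ring

lemma hgt_eq_height_take (P : List Step) (i : ℕ) : hgt P i = height (P.take i) := rfl

lemma hgt_length (P : List Step) : hgt P P.length = height P := by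
  rw [hgt_eq_height_take, List.take_length]

lemma hgt_add_one {P : List Step} {i : ℕ} (hi : i < P.length) :
    hgt P (i + 1) = hgt P i + P[i].val := by
  rw [hgt_eq_height_take, hgt_eq_height_take, List.take_add_one, List.getElem?_eq_getElem hi,
    Option.toList_some, height_append, height_cons, height_nil, add_zero]

def StaysNonneg (h : ℤ) (w : List Step) : Prop := ∀ i, 0 ≤ h + hgt w i

lemma staysNonneg_nil {h : ℤ} : StaysNonneg h [] ↔ 0 ≤ h := by
  simp [StaysNonneg, hgt]

lemma staysNonneg_cons {h : ℤ} {x : Step} {w : List Step} :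
    StaysNonneg h (x :: w) ↔ 0 ≤ h ∧ StaysNonneg (h + x.val) w := by
  have hgt_succ : ∀ i, hgt (x :: w) (i + 1) = x.val + hgt w i := fun i => by
    simp [hgt_eq_height_take]
  constructor
  · intro H
    refine ⟨by simpa [hgt] using H 0, fun i => ?_⟩
    linarith [H (i + 1), hgt_succ i]
  · rintro ⟨h0, H⟩ (_ | i)
    · simpa [hgt] using h0
    · linarith [H i, hgt_succ i]

lemma staysNonneg_append {h : ℤ} {v w : List Step} :
    StaysNonneg h (v ++ w) ↔ StaysNonneg h v ∧ StaysNonneg (h + height v) w := by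
  induction v generalizing h with
  | nil =>
    simp only [List.nil_append, staysNonneg_nil, height_nil, add_zero, iff_and_self]
    exact fun H => by simpa [hgt] using H 0
  | cons x v ih => simp [staysNonneg_cons, ih, and_assoc, add_assoc]

lemma staysNonneg_UDpow {h : ℤ} (hh : 0 ≤ h) (n : ℕ) : StaysNonneg h (UDpow n) := by
  induction n with
  | zero => exact staysNonneg_nil.2 hh
  | succ n ih =>
    simp only [UDpow_succ, staysNonneg_cons, Step.val]
    exact ⟨hh, by linarith, by simpa using ih⟩

lemma staysNonneg_DUpow {h : ℤ} (hh : 1 ≤ h) (n : ℕ) : StaysNonneg h (DUpow n) := by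
  induction n with
  | zero => exact staysNonneg_nil.2 (by linarith)
  | succ n ih =>
    simp only [DUpow_succ, staysNonneg_cons, Step.val]
    exact ⟨by linarith, by linarith, by simpa using ih⟩

lemma staysNonneg_Upow {h : ℤ} (hh : 0 ≤ h) (k : ℕ) : StaysNonneg h (Upow k) := by
  induction k generalizing h with
  | zero => exact staysNonneg_nil.2 hh
  | succ k ih =>
    rw [Upow, List.replicate_succ, staysNonneg_cons]
    exact ⟨hh, ih (by simp [Step.val]; linarith)⟩

lemma staysNonneg_gapWord {h : ℤ} (hh : 2 ≤ h) (j : ℕ) (b : Bool) :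
    StaysNonneg h (gapWord j b D) ∧ height (gapWord j b D) = -(b.toNat + 1) := by
  cases b <;> simp [gapWord, staysNonneg_append, staysNonneg_cons, staysNonneg_nil,
    staysNonneg_DUpow (show 1 ≤ h by linarith), Step.val] <;> omega

/-- Each run `U^k` with `k ≥ 2` climbs at least as much as the following gap descends. -/
lemma staysNonneg_catBody {mids : List (ℕ × ℕ × Bool)} {kr : ℕ} (hA : Admissible mids kr)
    (m : ℕ) (b : Bool) {h : ℤ} (hh : 0 ≤ h) :
    StaysNonneg h (catBody mids kr m b) ∧ 1 ≤ h + height (catBody mids kr m b) := by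
  induction mids generalizing h with
  | nil =>
    have hkr : (2 : ℤ) ≤ kr := by exact_mod_cast hA.2
    cases b <;> simp [catBody, staysNonneg_append, staysNonneg_cons, staysNonneg_nil,
      staysNonneg_Upow hh, staysNonneg_DUpow (show 1 ≤ h + kr by linarith), Step.val] <;> omega
  | cons t mids ih =>
    obtain ⟨ht, hA⟩ := admissible_cons.1 hA
    have ht' : (2 : ℤ) ≤ t.1 := by exact_mod_cast ht
    obtain ⟨hgap, hgap_height⟩ :=
      staysNonneg_gapWord (show 2 ≤ h + t.1 by linarith) t.2.1 t.2.2
    have hb : (t.2.2.toNat : ℤ) ≤ 1 := by exact_mod_cast Bool.toNat_le t.2.2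
    obtain ⟨hrest, hrest_height⟩ := ih hA (h := h + t.1 - (t.2.2.toNat + 1)) (by linarith)
    simp only [catBody, staysNonneg_append, height_append, height_Upow, hgap_height]
    refine ⟨⟨⟨staysNonneg_Upow hh _, hgap⟩, ?_⟩, by linarith⟩
    convert hrest using 1
    ring

lemma C_not_mem_UDpow (c n : ℕ) : C c ∉ UDpow n := by
  simp [UDpow]

lemma C_not_mem_catBody (c : ℕ) (mids : List (ℕ × ℕ × Bool)) (kr m : ℕ) (b : Bool) :
    C c ∉ catBody mids kr m b := by
  induction mids with
  | nil => cases b <;> simp [catBody, Upow, DUpow]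
  | cons t mids ih =>
    obtain ⟨k, j, bb⟩ := t
    cases bb <;> simp [catBody, gapWord, Upow, DUpow, ih]

lemma inE_append_cfin {W : List Step} {s : ℕ} (hW : StaysNonneg 0 W) (hC : ∀ c, C c ∉ W)
    (hs : height W = s) (hs1 : 1 ≤ s) : InE (W ++ [cfin s]) := by
  refine ⟨fun i => ?_, by rw [hgt_length]; simp [hs], fun i c hc => ?_⟩
  · have hlast : StaysNonneg (0 + height W) [cfin s] :=
      staysNonneg_cons.2 ⟨by simp [hs], staysNonneg_nil.2 (by simp [hs])⟩
    simpa using staysNonneg_append.2 ⟨hW, hlast⟩ i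
  · rcases Nat.lt_or_ge i W.length with hi | hi
    · rw [List.getElem?_append_left hi] at hc
      exact absurd (List.mem_of_getElem? hc) (hC c)
    · rw [List.getElem?_append_right hi] at hc
      obtain ⟨hi', hcs⟩ : i - W.length = 0 ∧ cfin s = C c := by
        simpa [List.getElem?_cons, Nat.sub_eq_zero_iff_le] using hc
      obtain rfl : i = W.length := by omega
      unfold cfin at hcs
      split at hcs
      · simp at hcs
      · cases hcs
        exact ⟨by omega, by simpa [hgt_eq_height_take] using hs⟩

lemma Step.eq_of_val_eq {x y : Step} (hx : ∀ k, x = C k → 2 ≤ k) (hy : ∀ k, y = C k → 2 ≤ k)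
    (h : x.val = y.val) : x = y := by
  cases x <;> cases y <;> simp_all [Step.val] <;> omega

lemma InE.eq_of_append_singleton {W : List Step} {x y : Step} (hx : InE (W ++ [x]))
    (hy : InE (W ++ [y])) : x = y := by
  have hxv := hx.2.1
  have hyv := hy.2.1
  rw [hgt_length] at hxv hyv
  simp only [height_append, height_cons, height_nil, add_zero] at hxv hyv
  exact Step.eq_of_val_eq (fun k hk => (hx.2.2 W.length k (by simp [hk])).1)
    (fun k hk => (hy.2.2 W.length k (by simp [hk])).1) (by linarith)

lemma InE.getLast?_ne_U {P : List Step} (hP : InE P) : P.getLast? ≠ some U := by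
  intro h
  obtain ⟨W, rfl⟩ := List.getLast?_eq_some_iff.1 h
  have hend := hP.2.1
  have hW := hP.1 W.length
  rw [hgt_length] at hend
  simp [hgt_eq_height_take, Step.val] at hend hW
  linarith

lemma InE.getElem?_eq_U {P : List Step} (hP : InE P) {i : ℕ} (hi : i < P.length)
    (h0 : hgt P i = 0) : P[i]? = some U := by
  have hstep := hgt_add_one hi
  have hnn := hP.1 (i + 1)
  rw [List.getElem?_eq_getElem hi]
  match hPi : P[i] with
  | U => rfl
  | D => simp [hPi, Step.val] at hstep; omega
  | C k =>
    have := hP.2.2 i k (by rw [List.getElem?_eq_getElem hi, hPi])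
    omega

lemma InE.getElem?_eq_D {P : List Step} (hP : InE P) {i : ℕ} (hi : i < P.length)
    (h1 : hgt P i = 1) (hU : P[i]? ≠ some U) : P[i]? = some D := by
  rw [List.getElem?_eq_getElem hi] at hU ⊢
  match hPi : P[i] with
  | U => simp [hPi] at hU
  | D => rfl
  | C k =>
    have := hP.2.2 i k (by rw [List.getElem?_eq_getElem hi, hPi])
    omega

/-- Before its first `UU`, a path in `ℰ` alternates between heights `0` and `1`. -/
lemma InE.take_eq_UDpow {P : List Step} (hP : InE P) {n : ℕ} (hn : 2 * n ≤ P.length)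
    (h : ∀ j, j + 1 < 2 * n → ¬ UUAt P j) : P.take (2 * n) = UDpow n := by
  induction n with
  | zero => rfl
  | succ n ih =>
    have htake := ih (by omega) fun j hj => h j (by omega)
    have hU : P[2 * n]? = some U :=
      hP.getElem?_eq_U (by omega) (by rw [hgt_eq_height_take, htake, height_UDpow])
    have hD : P[2 * n + 1]? = some D := by
      refine hP.getElem?_eq_D (by omega) ?_ fun hU' => h (2 * n) (by omega) ⟨hU, hU'⟩
      rw [hgt_add_one (by omega), hgt_eq_height_take, htake, height_UDpow,
        (List.getElem_eq_iff _).2 hU]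
      rfl
    rw [show 2 * (n + 1) = 2 * n + 1 + 1 by ring, List.take_add_one, List.take_add_one, htake,
      hU, hD, UDpow_succ']
    simp

lemma InE.exists_take_eq_UDpow {P : List Step} (hP : InE P) {a : ℕ} (ha : UUAt P a)
    (hmin : ∀ j < a, ¬ UUAt P j) : ∃ n, a = 2 * n ∧ P.take a = UDpow n := by
  have hlt := lt_length_of_uuAt ha
  obtain ⟨n, rfl | rfl⟩ := Nat.even_or_odd' a
  · exact ⟨n, rfl, hP.take_eq_UDpow (by omega) fun j hj => hmin j (by omega)⟩
  · have htake := hP.take_eq_UDpow (n := n) (by omega) fun j hj => hmin j (by omega)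
    have hU := hP.getElem?_eq_U (i := 2 * n) (by omega)
      (by rw [hgt_eq_height_take, htake, height_UDpow])
    exact absurd ⟨hU, ha.1⟩ (hmin (2 * n) (by omega))

lemma InE.eq_UDpow_of_uuFree {P : List Step} (hP : InE P) (h : UUFree P) :
    P = UDpow (P.length / 2) := by
  obtain ⟨n, hn | hn⟩ := Nat.even_or_odd' P.length
  · have := hP.take_eq_UDpow (n := n) (by omega) fun j _ => h j
    rwa [← hn, List.take_length, ← Nat.mul_div_cancel_left n two_pos, ← hn] at this
  · have htake := hP.take_eq_UDpow (n := n) (by omega) fun j _ => h j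
    have hU := hP.getElem?_eq_U (i := 2 * n) (by omega)
      (by rw [hgt_eq_height_take, htake, height_UDpow])
    refine absurd ?_ hP.getLast?_ne_U
    rwa [List.getLast?_eq_getElem?, hn, Nat.add_sub_cancel]

theorem exists_catBody_uuEquiv (w : List Step) (h0 : UUAt w 0) (hlast : w.getLast? ≠ some U) :
    ∃ mids kr m b, Admissible mids kr ∧ (catBody mids kr m b).length + 1 = w.length ∧
      ∀ x, x ≠ U → UUEquiv w (catBody mids kr m b ++ [x]) := by
  induction hn : w.length using Nat.strong_induction_on generalizing w with
  | _ n ih =>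
  subst hn
  obtain ⟨k, w', hk, rfl, hw'head, hw'ne, hw'last⟩ :=
    exists_eq_Upow_append_of_uuAt_zero h0 hlast
  by_cases hex : ∃ i, UUAt w' i
  · obtain ⟨a, ha, hmin⟩ := exists_first_uuAt hex
    have hlt := lt_length_of_uuAt ha
    have ha0 : 0 < a := Nat.pos_of_ne_zero fun h => hw'head (by
      rw [List.head?_eq_getElem?, ← h]; exact ha.1)
    obtain ⟨mids, kr, m, b, hA, hlen, hequiv⟩ := ih (w'.drop a).length (by simp; omega)
      (w'.drop a) (by rwa [uuAt_drop]) (by rwa [List.getLast?_drop, if_neg (by omega)]) rfl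
    obtain ⟨j, bb, hj⟩ := exists_length_gapWord_eq ha0
    refine ⟨(k, j, bb) :: mids, kr, m, b, admissible_cons.2 ⟨hk, hA⟩, ?_, fun x hx => ?_⟩
    · have := congrArg List.length (catBody_cons_append (k, j, bb) mids kr m b D)
      simp only [List.length_append, length_Upow, hj, List.length_drop] at this hlen ⊢
      omega
    · rw [catBody_cons_append]
      conv_lhs => rw [← List.take_append_drop a w']
      refine (UUEquiv.refl _).append rfl
        ((uuEquiv_of_uuFree (uuFree_take_of_first_uuAt hmin)
          (uuFree_gapWord (by simp) j bb)).append (by simp [hj]; omega) (hequiv x hx)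
          (fun h => getLast?_take_ne_U_of_first_uuAt ha hmin h.1)
          (by simp [getLast?_gapWord]))
        (by rw [List.take_append_drop]; exact fun h => hw'head h.2)
        (fun h => head?_gapWord_append_ne_U (by simp) j bb _ h.2)
  · obtain ⟨j, b, hj⟩ := exists_length_gapWord_eq (List.length_pos_iff.2 hw'ne)
    refine ⟨[], k, j, b, ⟨by simp, hk⟩, ?_, fun x hx => ?_⟩
    · have := congrArg List.length (catBody_nil_append k j b D)
      simp only [List.length_append, length_Upow, hj, List.length_singleton] at this ⊢
      omega
    · rw [catBody_nil_append]
      exact (UUEquiv.refl _).append rfl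
        (uuEquiv_of_uuFree (not_exists.1 hex) (uuFree_gapWord hx j b))
        (fun h => hw'head h.2) (fun h => head?_gapWord_ne_U hx j b h.2)

theorem exists_inE_inF_uuEquiv {P : List Step} (hP : InE P) :
    ∃ Q, (InE Q ∧ InF Q) ∧ Q.length = P.length ∧ UUEquiv P Q := by
  by_cases hex : ∃ i, UUAt P i
  · obtain ⟨a, ha, hmin⟩ := exists_first_uuAt hex
    obtain ⟨n, rfl, htake⟩ := hP.exists_take_eq_UDpow ha hmin
    have hlt := lt_length_of_uuAt ha
    obtain ⟨mids, kr, m, b, hA, hlen, hequiv⟩ := exists_catBody_uuEquiv (P.drop (2 * n))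
      (by rwa [uuAt_drop]) (by rw [List.getLast?_drop, if_neg (by omega)]; exact hP.getLast?_ne_U)
    obtain ⟨hnonneg, hpos⟩ := staysNonneg_catBody hA m b le_rfl
    obtain ⟨s, hs⟩ := Int.eq_ofNat_of_zero_le (show 0 ≤ height (catBody mids kr m b) by linarith)
    rw [hs] at hpos
    refine ⟨UDpow n ++ (catBody mids kr m b ++ [cfin s]),
      ⟨?_, inF_iff.2 (Or.inr ⟨n, mids, kr, m, s, b, hA, by omega, rfl⟩)⟩, ?_, ?_⟩
    · rw [← List.append_assoc]
      exact inE_append_cfin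
        (staysNonneg_append.2 ⟨staysNonneg_UDpow le_rfl n, by simpa using hnonneg⟩)
        (fun c => by simp [C_not_mem_UDpow, C_not_mem_catBody]) (by simp [hs]) (by omega)
    · simp only [List.length_append, length_UDpow, List.length_drop, List.length_singleton]
        at hlen ⊢
      omega
    · conv_lhs => rw [← List.take_append_drop (2 * n) P, htake]
      exact (UUEquiv.refl _).append rfl (hequiv _ (cfin_ne_U_s6 s))
        (fun h => getLast?_UDpow_ne_U n h.1) (fun h => getLast?_UDpow_ne_U n h.1)
  · exact ⟨P, ⟨hP, inF_iff.2 (Or.inl ⟨_, hP.eq_UDpow_of_uuFree (not_exists.1 hex)⟩)⟩, rfl,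
      UUEquiv.refl P⟩

/-- The gap after the current run becomes the prefix `X` of the next step, and gap words of
equal length coincide. -/
theorem catBody_cancel {kr kr' m m' : ℕ} {b b' : Bool} {x x' : Step} (hx : x ≠ U)
    (hx' : x' ≠ U) :
    ∀ {mids mids' : List (ℕ × ℕ × Bool)} {X X' : List Step},
      Admissible mids kr → Admissible mids' kr' →
      UUFree X → X.getLast? ≠ some U → UUFree X' → X'.getLast? ≠ some U →
      (X ++ (catBody mids kr m b ++ [x])).length =
        (X' ++ (catBody mids' kr' m' b' ++ [x'])).length →
      UUEquiv (X ++ (catBody mids kr m b ++ [x])) (X' ++ (catBody mids' kr' m' b' ++ [x'])) →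
      X.length = X'.length ∧ mids = mids' ∧ kr = kr' ∧ m = m' ∧ b = b'
  | [], [], X, X', hA, hA', hX, hXU, hX', hXU', hlen, h => by
    rw [catBody_nil_append, catBody_nil_append] at hlen h
    obtain ⟨hXX, rfl, -⟩ := uuEquiv_glue_cancel hA.2 hA'.2 hX hXU (head?_gapWord_ne_U hx m b)
      hX' hXU' (head?_gapWord_ne_U hx' m' b') h
    simp only [List.length_append, length_Upow] at hlen
    obtain ⟨rfl, rfl⟩ :=
      eq_of_length_gapWord_eq (by omega : (gapWord m b x).length = (gapWord m' b' x').length)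
    exact ⟨hXX, rfl, rfl, rfl, rfl⟩
  | t :: mids, [], X, X', hA, hA', hX, hXU, hX', hXU', _, h => by
    rw [catBody_cons_append, catBody_nil_append] at h
    obtain ⟨-, -, hT⟩ := uuEquiv_glue_cancel (admissible_cons.1 hA).1 hA'.2 hX hXU
      (head?_gapWord_append_ne_U (by simp) _ _ _) hX' hXU' (head?_gapWord_ne_U hx' m' b') h
    exact (uuFree_gapWord hx' m' b' _ ((hT _).1 (uuAt_length_append_catBody
      (admissible_cons.1 hA).2 m b (uuFree_gapWord (by simp) _ _)
      (by simp [getLast?_gapWord]) hx))).elim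
  | [], t' :: mids', X, X', hA, hA', hX, hXU, hX', hXU', _, h => by
    rw [catBody_nil_append, catBody_cons_append] at h
    obtain ⟨-, -, hT⟩ := uuEquiv_glue_cancel hA.2 (admissible_cons.1 hA').1 hX hXU
      (head?_gapWord_ne_U hx m b) hX' hXU' (head?_gapWord_append_ne_U (by simp) _ _ _) h
    exact (uuFree_gapWord hx m b _ ((hT _).2 (uuAt_length_append_catBody
      (admissible_cons.1 hA').2 m' b' (uuFree_gapWord (by simp) _ _)
      (by simp [getLast?_gapWord]) hx'))).elim
  | t :: mids, t' :: mids', X, X', hA, hA', hX, hXU, hX', hXU', hlen, h => by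
    rw [catBody_cons_append, catBody_cons_append] at hlen h
    obtain ⟨hXX, hk, hT⟩ := uuEquiv_glue_cancel (admissible_cons.1 hA).1
      (admissible_cons.1 hA').1 hX hXU (head?_gapWord_append_ne_U (by simp) _ _ _) hX' hXU'
      (head?_gapWord_append_ne_U (by simp) _ _ _) h
    obtain ⟨hgap, rfl, rfl, rfl, rfl⟩ := catBody_cancel hx hx' (admissible_cons.1 hA).2
      (admissible_cons.1 hA').2 (uuFree_gapWord (by simp) _ _) (by simp [getLast?_gapWord])
      (uuFree_gapWord (by simp) _ _) (by simp [getLast?_gapWord])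
      (by simp only [List.length_append, length_Upow] at hlen ⊢; omega) hT
    obtain ⟨hj, hb⟩ := eq_of_length_gapWord_eq hgap
    exact ⟨hXX, by rw [Prod.ext hk (Prod.ext hj hb)], rfl, rfl, rfl⟩

theorem eq_of_uuEquiv {Q Q' : List Step} (hQ : InE Q) (hFQ : InF Q) (hQ' : InE Q')
    (hFQ' : InF Q') (hlen : Q.length = Q'.length) (h : UUEquiv Q Q') : Q = Q' := by
  rcases inF_iff.1 hFQ with ⟨k, rfl⟩ | ⟨l0, mids, kr, m, s, b, hA, -, rfl⟩ <;>
    rcases inF_iff.1 hFQ' with ⟨k', rfl⟩ | ⟨l0', mids', kr', m', s', b', hA', -, rfl⟩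
  · simp only [length_UDpow] at hlen
    rw [show k = k' by omega]
  · exact absurd ((h _).2 (uuAt_length_append_catBody hA' m' b' (uuFree_UDpow l0')
      (getLast?_UDpow_ne_U l0') (cfin_ne_U_s6 s'))) (uuFree_UDpow k _)
  · exact absurd ((h _).1 (uuAt_length_append_catBody hA m b (uuFree_UDpow l0)
      (getLast?_UDpow_ne_U l0) (cfin_ne_U_s6 s))) (uuFree_UDpow k' _)
  · obtain ⟨hl, rfl, rfl, rfl, rfl⟩ := catBody_cancel (cfin_ne_U_s6 s) (cfin_ne_U_s6 s') hA hA'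
      (uuFree_UDpow l0) (getLast?_UDpow_ne_U l0) (uuFree_UDpow l0') (getLast?_UDpow_ne_U l0')
      hlen h
    obtain rfl : l0 = l0' := by simpa using hl
    simp only [← List.append_assoc] at hQ hQ' ⊢
    rw [hQ.eq_of_append_singleton hQ']

end

/-- ℱ is a complete set of representatives of the UU-equivalence classes of ℰ. -/
theorem F_complete_set_of_representatives_for_UUEquiv (P : List Step) (hP : InE P) :
    ∃! Q : List Step, (InE Q ∧ InF Q) ∧ Q.length = P.length ∧ UUEquiv P Q := by
  obtain ⟨Q, hQ, hlen, hPQ⟩ := exists_inE_inF_uuEquiv hP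
  refine ⟨Q, ⟨hQ, hlen, hPQ⟩, fun Q' ⟨hQ', hlen', hPQ'⟩ => ?_⟩
  exact eq_of_uuEquiv hQ'.1 hQ'.2 hQ.1 hQ.2 (hlen'.trans hlen.symm) (hPQ'.symm.trans hPQ)
end
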